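/- (Case A.I.3a.) If M1 > N1, M2 = N1, and N1 > N2 ≥ 1, then Ph1 = Pi = {(d1,d2) ∈ ℝ² : d1 ≥ 0, 0 ≤ d2 ≤ N2, d1+d2 ≤ M2} and Ph2 = Pd. -/

import Mathlib

open Set

noncomputable section

/-- Bound L01 : 0 ≤ d1 ≤ min(M1,N1). -/
def L01 (M1 N1 : ℕ) (d : ℝ × ℝ) : Prop := 0 ≤ d.1 ∧ d.1 ≤ min (M1 : ℝ) (N1 : ℝ)

/-- Bound L02 : 0 ≤ d2 ≤ min(M2,N2). -/
def L02 (M2 N2 : ℕ) (d : ℝ × ℝ) : Prop := 0 ≤ d.2 ∧ d.2 ≤ min (M2 : ℝ) (N2 : ℝ)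

/-- Bound L1 : d1/min(N1+N2,M1) + d2/min(N2,M1) ≤ min(N2,M1+M2)/min(N2,M1). -/
def L1 (M1 M2 N1 N2 : ℕ) (d : ℝ × ℝ) : Prop :=
  d.1 / min ((N1 : ℝ) + (N2 : ℝ)) (M1 : ℝ) + d.2 / min (N2 : ℝ) (M1 : ℝ) ≤
    min (N2 : ℝ) ((M1 : ℝ) + (M2 : ℝ)) / min (N2 : ℝ) (M1 : ℝ)

/-- Bound L2 : d1/min(N1,M2) + d2/min(N1+N2,M2) ≤ min(N1,M1+M2)/min(N1,M2). -/
def L2 (M1 M2 N1 N2 : ℕ) (d : ℝ × ℝ) : Prop :=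
  d.1 / min (N1 : ℝ) (M2 : ℝ) + d.2 / min ((N1 : ℝ) + (N2 : ℝ)) (M2 : ℝ) ≤
    min (N1 : ℝ) ((M1 : ℝ) + (M2 : ℝ)) / min (N1 : ℝ) (M2 : ℝ)

/-- Bound L3 : d1+d2 ≤ min(M1+M2, N1+N2, max(M1,N2), max(M2,N1)). -/
def L3 (M1 M2 N1 N2 : ℕ) (d : ℝ × ℝ) : Prop :=
  d.1 + d.2 ≤
    min (min ((M1 : ℝ) + (M2 : ℝ)) ((N1 : ℝ) + (N2 : ℝ)))
      (min (max (M1 : ℝ) (N2 : ℝ)) (max (M2 : ℝ) (N1 : ℝ)))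

/-- Bound L4 : d1 + d2·(N1+2N2−M2)/N2 ≤ N1+N2. -/
def L4 (M2 N1 N2 : ℕ) (d : ℝ × ℝ) : Prop :=
  d.1 + d.2 * (((N1 : ℝ) + 2 * (N2 : ℝ) - (M2 : ℝ)) / (N2 : ℝ)) ≤ (N1 : ℝ) + (N2 : ℝ)

/-- Bound L5 : d2 + d1·(N2+2N1−M1)/N1 ≤ N1+N2. -/
def L5 (M1 N1 N2 : ℕ) (d : ℝ × ℝ) : Prop :=
  d.2 + d.1 * (((N2 : ℝ) + 2 * (N1 : ℝ) - (M1 : ℝ)) / (N1 : ℝ)) ≤ (N1 : ℝ) + (N2 : ℝ)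

/-- Condition 1 : M1 > N1+N2−M2 > N1 > N2 > M2 > N2(N2−M2)/(N1−M2). -/
def Cond1 (M1 M2 N1 N2 : ℕ) : Prop :=
  (M1 : ℝ) > (N1 : ℝ) + (N2 : ℝ) - (M2 : ℝ) ∧
  (N1 : ℝ) + (N2 : ℝ) - (M2 : ℝ) > (N1 : ℝ) ∧
  (N1 : ℝ) > (N2 : ℝ) ∧ (N2 : ℝ) > (M2 : ℝ) ∧
  (M2 : ℝ) > (N2 : ℝ) * ((N2 : ℝ) - (M2 : ℝ)) / ((N1 : ℝ) - (M2 : ℝ))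

/-- Condition 2 : M2 > N1+N2−M1 > N2 > N1 > M1 > N1(N1−M1)/(N2−M1). -/
def Cond2 (M1 M2 N1 N2 : ℕ) : Prop :=
  (M2 : ℝ) > (N1 : ℝ) + (N2 : ℝ) - (M1 : ℝ) ∧
  (N1 : ℝ) + (N2 : ℝ) - (M1 : ℝ) > (N2 : ℝ) ∧
  (N2 : ℝ) > (N1 : ℝ) ∧ (N1 : ℝ) > (M1 : ℝ) ∧
  (M1 : ℝ) > (N1 : ℝ) * ((N1 : ℝ) - (M1 : ℝ)) / ((N2 : ℝ) - (M1 : ℝ))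

/-- DoF outer-bound region under perfect and instantaneous CSIT. -/
def Pinst (M1 M2 N1 N2 : ℕ) : Set (ℝ × ℝ) :=
  {d | L01 M1 N1 d ∧ L02 M2 N2 d ∧ L3 M1 M2 N1 N2 d}

/-- DoF outer-bound region under hybrid CSIT 1. -/
def Ph1 (M1 M2 N1 N2 : ℕ) : Set (ℝ × ℝ) :=
  {d | L01 M1 N1 d ∧ L02 M2 N2 d ∧ L2 M1 M2 N1 N2 d ∧ L3 M1 M2 N1 N2 d ∧
    (Cond2 M1 M2 N1 N2 → L5 M1 N1 N2 d)}

/-- DoF outer-bound region under hybrid CSIT 2. -/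
def Ph2 (M1 M2 N1 N2 : ℕ) : Set (ℝ × ℝ) :=
  {d | L01 M1 N1 d ∧ L02 M2 N2 d ∧ L1 M1 M2 N1 N2 d ∧ L3 M1 M2 N1 N2 d ∧
    (Cond1 M1 M2 N1 N2 → L4 M2 N1 N2 d)}

/-- DoF outer-bound region under delayed CSIT. -/
def Pd (M1 M2 N1 N2 : ℕ) : Set (ℝ × ℝ) :=
  {d | L01 M1 N1 d ∧ L02 M2 N2 d ∧ L1 M1 M2 N1 N2 d ∧ L2 M1 M2 N1 N2 d ∧
    L3 M1 M2 N1 N2 d ∧ (Cond1 M1 M2 N1 N2 → L4 M2 N1 N2 d) ∧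
    (Cond2 M1 M2 N1 N2 → L5 M1 N1 N2 d)}

/-!
When `M2 = N1 ≤ M1`, both the sum bound L3 and the hybrid-1 bound L2 collapse to
`d1 + d2 ≤ N1`, and Condition 2 fails because it demands `N1 > M1`. Hence the bounds
that Ph1 adds to Pi, and that Pd adds to Ph2, are all redundant.
-/

section Redundancy

variable {M1 M2 N1 N2 : ℕ}

theorem not_cond2_of_le (h : N1 ≤ M1) : ¬ Cond2 M1 M2 N1 N2 := by
  rintro ⟨-, -, -, hlt, -⟩
  exact absurd (by exact_mod_cast h : (N1 : ℝ) ≤ M1) (not_le.2 hlt)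

theorem Ph1_eq_Pinst_of_L2 (hL2 : ∀ d, L3 M1 M2 N1 N2 d → L2 M1 M2 N1 N2 d)
    (hC2 : ¬ Cond2 M1 M2 N1 N2) : Ph1 M1 M2 N1 N2 = Pinst M1 M2 N1 N2 := by
  ext d
  exact ⟨fun ⟨h01, h02, _, h3, _⟩ => ⟨h01, h02, h3⟩,
    fun ⟨h01, h02, h3⟩ => ⟨h01, h02, hL2 d h3, h3, hC2.elim⟩⟩

theorem Ph2_eq_Pd_of_L2 (hL2 : ∀ d, L3 M1 M2 N1 N2 d → L2 M1 M2 N1 N2 d)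
    (hC2 : ¬ Cond2 M1 M2 N1 N2) : Ph2 M1 M2 N1 N2 = Pd M1 M2 N1 N2 := by
  ext d
  exact ⟨fun ⟨h01, h02, h1, h3, h4⟩ => ⟨h01, h02, h1, hL2 d h3, h3, h4, hC2.elim⟩,
    fun ⟨h01, h02, h1, _, h3, h4, _⟩ => ⟨h01, h02, h1, h3, h4⟩⟩

end Redundancy

section EqualAntennas

variable {M1 M2 N1 N2 : ℕ} {d : ℝ × ℝ}

theorem L3_iff_add_le (hM2 : M2 = N1) (h : N1 ≤ M1) :
    L3 M1 M2 N1 N2 d ↔ d.1 + d.2 ≤ N1 := by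
  subst hM2
  have h' : (M2 : ℝ) ≤ M1 := by exact_mod_cast h
  have hN2 : (0 : ℝ) ≤ N2 := N2.cast_nonneg
  have hM1 : (0 : ℝ) ≤ M1 := M1.cast_nonneg
  have hmin : min (min ((M1 : ℝ) + M2) (M2 + N2)) (min (max (M1 : ℝ) N2) (max M2 M2))
      = M2 := by
    rw [max_self, min_eq_right (h'.trans (le_max_left _ _))]
    exact min_eq_right (le_min (by linarith) (by linarith))
  rw [L3, hmin]

theorem L2_of_add_le (hM2 : M2 = N1) (hN1 : 0 < N1) (h : d.1 + d.2 ≤ N1) :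
    L2 M1 M2 N1 N2 d := by
  subst hM2
  have hpos : (0 : ℝ) < M2 := by exact_mod_cast hN1
  rwa [L2, min_self, min_eq_right (le_add_of_nonneg_right N2.cast_nonneg),
    min_eq_left (le_add_of_nonneg_left M1.cast_nonneg), div_self hpos.ne', ← add_div,
    div_le_one hpos]

theorem Pinst_eq_of_M2_eq_N1 (hM2 : M2 = N1) (h : N1 ≤ M1) (hN2 : N2 ≤ N1) :
    Pinst M1 M2 N1 N2 = {d : ℝ × ℝ | 0 ≤ d.1 ∧ 0 ≤ d.2 ∧ d.2 ≤ N2 ∧ d.1 + d.2 ≤ M2} := by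
  ext d
  have hM1 : (N1 : ℝ) ≤ M1 := by exact_mod_cast h
  have hN2' : (N2 : ℝ) ≤ N1 := by exact_mod_cast hN2
  simp only [Pinst, mem_ofPred_eq, L01, L02, L3_iff_add_le hM2 h, min_eq_right hM1]
  subst hM2
  rw [min_eq_right hN2']
  constructor
  · rintro ⟨⟨h1, -⟩, ⟨h2, h2N⟩, hsum⟩
    exact ⟨h1, h2, h2N, hsum⟩
  · rintro ⟨h1, h2, h2N, hsum⟩
    exact ⟨⟨h1, by linarith⟩, ⟨h2, h2N⟩, hsum⟩

end EqualAntennas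

theorem caseAI3a_general (M1 M2 N1 N2 : ℕ)
    (h1 : M1 > N1) (h2 : M2 = N1) (h3 : N1 > N2) :
    Ph1 M1 M2 N1 N2 = Pinst M1 M2 N1 N2 ∧
    Pinst M1 M2 N1 N2 =
      {d : ℝ × ℝ | 0 ≤ d.1 ∧ 0 ≤ d.2 ∧ d.2 ≤ (N2 : ℝ) ∧ d.1 + d.2 ≤ (M2 : ℝ)} ∧
    Ph2 M1 M2 N1 N2 = Pd M1 M2 N1 N2 := by
  have hC2 : ¬ Cond2 M1 M2 N1 N2 := not_cond2_of_le h1.le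
  have hL2 : ∀ d, L3 M1 M2 N1 N2 d → L2 M1 M2 N1 N2 d := fun d hd =>
    L2_of_add_le h2 (Nat.zero_lt_of_lt h3) ((L3_iff_add_le h2 h1.le).1 hd)
  exact ⟨Ph1_eq_Pinst_of_L2 hL2 hC2, Pinst_eq_of_M2_eq_N1 h2 h1.le h3.le,
    Ph2_eq_Pd_of_L2 hL2 hC2⟩

/-- Case A.I.3a: if M1 > N1, M2 = N1 and N1 > N2 ≥ 1, then
Ph1 = Pi = {(d1,d2) : d1 ≥ 0, 0 ≤ d2 ≤ N2, d1+d2 ≤ M2} and Ph2 = Pd. -/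
theorem caseAI3a (M1 M2 N1 N2 : ℕ)
    (hM1 : 0 < M1) (hM2 : 0 < M2) (hN1 : 0 < N1) (hN2 : 1 ≤ N2)
    (h1 : M1 > N1) (h2 : M2 = N1) (h3 : N1 > N2) :
    Ph1 M1 M2 N1 N2 = Pinst M1 M2 N1 N2 ∧
    Pinst M1 M2 N1 N2 =
      {d : ℝ × ℝ | 0 ≤ d.1 ∧ 0 ≤ d.2 ∧ d.2 ≤ (N2 : ℝ) ∧ d.1 + d.2 ≤ (M2 : ℝ)} ∧
    Ph2 M1 M2 N1 N2 = Pd M1 M2 N1 N2 :=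
  caseAI3a_general M1 M2 N1 N2 h1 h2 h3
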